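/- arXiv:1601.06119 — 3 statements merged into one kernel-verified Lean document; each statement's English description precedes it below -/
import Mathlib

section
/- For finite lists x, c1, c2 over α with c1 ≠ x and c2 ≠ x: δ_CPL(x, c1) < δ_CPL(x, c2) if and only if either cpl(x, c1) > cpl(x, c2), or cpl(x, c1) = cpl(x, c2) and |c1| < |c2|. Moreover, δ_CPL(x, c1) = δ_CPL(x, c2) if and only if cpl(x, c1) = cpl(x, c2) and |c1| = |c2|. -/
/-- The common prefix length of two lists. -/
def cpl {α : Type*} [DecidableEq α] : List α → List α → ℕ
  | a :: as, b :: bs => if a = b then cpl as bs + 1 else 0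
  | _, _ => 0

/-- The common-prefix-length based distance
`δ_CPL x y = L - cpl x y - 1/(|x| + |y| + 1)` for `x ≠ y`, and `0` for `x = y`. -/
def deltaCPL {α : Type*} [DecidableEq α] (L : ℕ) (x y : List α) : ℚ :=
  if x = y then 0
  else (L : ℚ) - cpl x y - 1 / ((x.length : ℚ) + y.length + 1)

/-!
Off the diagonal, `δ_CPL x c = L - (cpl x c + t)` with a tie-break term `t = 1/(|x| + |c| + 1)`
lying in `(0, 1]` and strictly decreasing in `|c|`. A fractional term in `(0, 1]` can never
bridge a gap of one between integers, so `cpl x c + t`, and hence `δ_CPL x c` in reverse,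
is ordered lexicographically: first by `cpl x c`, then by `|c|`.
-/

section LexOrder

variable {K : Type*} [Field K] [LinearOrder K] [IsStrictOrderedRing K]

theorem intCast_add_lt_intCast_add_iff {a b : ℤ} {s t : K} (hs : s ∈ Set.Ioc 0 1)
    (ht : t ∈ Set.Ioc 0 1) : (a : K) + s < b + t ↔ a < b ∨ a = b ∧ s < t := by
  obtain ⟨hs₀, hs₁⟩ := hs
  obtain ⟨ht₀, ht₁⟩ := ht
  rcases lt_trichotomy a b with hab | rfl | hab
  · have : (a : K) + 1 ≤ b := by exact_mod_cast hab
    simp only [hab, true_or, iff_true]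
    linarith
  · simp
  · have : (b : K) + 1 ≤ a := by exact_mod_cast hab
    simp only [hab.not_gt, hab.ne', false_and, or_self, iff_false, not_lt]
    linarith

theorem intCast_add_eq_intCast_add_iff {a b : ℤ} {s t : K} (hs : s ∈ Set.Ioc 0 1)
    (ht : t ∈ Set.Ioc 0 1) : (a : K) + s = b + t ↔ a = b ∧ s = t := by
  constructor
  · intro h
    have hab : a = b := by
      by_contra hne
      rcases lt_or_gt_of_ne hne with hlt | hlt
      · exact (((intCast_add_lt_intCast_add_iff hs ht).2 (.inl hlt)).ne h)
      · exact (((intCast_add_lt_intCast_add_iff ht hs).2 (.inl hlt)).ne h.symm)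
    subst hab
    exact ⟨rfl, add_left_cancel h⟩
  · rintro ⟨rfl, rfl⟩
    rfl

theorem one_div_natCast_add_natCast_add_one_mem_Ioc (a b : ℕ) :
    1 / ((a : K) + b + 1) ∈ Set.Ioc 0 1 :=
  ⟨by positivity, (div_le_one (by positivity)).2 (by linarith [(a.cast_nonneg : (0 : K) ≤ a),
    (b.cast_nonneg : (0 : K) ≤ b)])⟩

theorem one_div_natCast_add_natCast_add_one_lt_iff (a b c : ℕ) :
    1 / ((a : K) + b + 1) < 1 / ((a : K) + c + 1) ↔ c < b := by
  rw [one_div_lt_one_div (by positivity) (by positivity)]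
  simp only [add_lt_add_iff_right, add_lt_add_iff_left, Nat.cast_lt]

theorem one_div_natCast_add_natCast_add_one_inj (a b c : ℕ) :
    1 / ((a : K) + b + 1) = 1 / ((a : K) + c + 1) ↔ b = c := by
  rw [div_eq_div_iff (by positivity) (by positivity)]
  simp only [one_mul, add_left_inj, add_right_inj, Nat.cast_inj]
  exact eq_comm

end LexOrder

section DeltaCPL

variable {α : Type*} [DecidableEq α] (L : ℕ) {x c₁ c₂ : List α}

theorem deltaCPL_of_ne {y : List α} (h : x ≠ y) :
    deltaCPL L x y = L - (((cpl x y : ℤ) : ℚ) + 1 / ((x.length : ℚ) + y.length + 1)) := by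
  rw [deltaCPL, if_neg h, Int.cast_natCast]
  ring

theorem deltaCPL_lt_deltaCPL_iff (h₁ : x ≠ c₁) (h₂ : x ≠ c₂) :
    deltaCPL L x c₁ < deltaCPL L x c₂ ↔
      cpl x c₂ < cpl x c₁ ∨ (cpl x c₁ = cpl x c₂ ∧ c₁.length < c₂.length) := by
  rw [deltaCPL_of_ne L h₁, deltaCPL_of_ne L h₂, sub_lt_sub_iff_left,
    intCast_add_lt_intCast_add_iff (one_div_natCast_add_natCast_add_one_mem_Ioc _ _)
      (one_div_natCast_add_natCast_add_one_mem_Ioc _ _),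
    one_div_natCast_add_natCast_add_one_lt_iff]
  omega

theorem deltaCPL_eq_deltaCPL_iff (h₁ : x ≠ c₁) (h₂ : x ≠ c₂) :
    deltaCPL L x c₁ = deltaCPL L x c₂ ↔ cpl x c₁ = cpl x c₂ ∧ c₁.length = c₂.length := by
  rw [deltaCPL_of_ne L h₁, deltaCPL_of_ne L h₂, sub_right_inj,
    intCast_add_eq_intCast_add_iff (one_div_natCast_add_natCast_add_one_mem_Ioc _ _)
      (one_div_natCast_add_natCast_add_one_mem_Ioc _ _),
    one_div_natCast_add_natCast_add_one_inj]
  omega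

end DeltaCPL

/-- For `c1 ≠ x` and `c2 ≠ x`: `δ_CPL x c1 < δ_CPL x c2` iff either
`cpl x c1 > cpl x c2`, or `cpl x c1 = cpl x c2` and `|c1| < |c2|`; and
`δ_CPL x c1 = δ_CPL x c2` iff `cpl x c1 = cpl x c2` and `|c1| = |c2|`. -/
theorem deltaCPL_compare {α : Type*} [DecidableEq α] (L : ℕ) (x c1 c2 : List α)
    (h1 : c1 ≠ x) (h2 : c2 ≠ x) :
    (deltaCPL L x c1 < deltaCPL L x c2 ↔
      cpl x c2 < cpl x c1 ∨ (cpl x c1 = cpl x c2 ∧ c1.length < c2.length)) ∧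
    (deltaCPL L x c1 = deltaCPL L x c2 ↔
      cpl x c1 = cpl x c2 ∧ c1.length = c2.length) :=
  ⟨deltaCPL_lt_deltaCPL_iff L h1.symm h2.symm, deltaCPL_eq_deltaCPL_iff L h1.symm h2.symm⟩
end

section
/- Let h : BitVec b → BitVec b be injective and k̃ : BitVec b. Then for all finite lists x and c of b-bit strings, cpl(hc(k̃, x), hc(k̃, c)) = cpl(x, c); i.e., the hash cascade exactly preserves common prefix lengths, so a node can determine the common prefix length of any coordinate with the receiver's coordinate from the return address alone. -/
/-- The hash cascade: `hc h k [a₁, …, a_l] = [d₁, …, d_l]` with `d₁ = h (k ^^^ a₁)` and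
`d_j = h (d_{j-1} ^^^ a_j)`. -/
def hc {b : ℕ} (h : BitVec b → BitVec b) : BitVec b → List (BitVec b) → List (BitVec b)
  | _, [] => []
  | k, a :: as => h (k ^^^ a) :: hc h (h (k ^^^ a)) as

/-- For an injective `h`, the hash cascade exactly preserves common prefix lengths:
`cpl (hc h k̃ x) (hc h k̃ c) = cpl x c` for all lists `x`, `c` of `b`-bit strings. -/
theorem cpl_hc {b : ℕ} (h : BitVec b → BitVec b) (hinj : Function.Injective h)
    (k : BitVec b) (x c : List (BitVec b)) :
    cpl (hc h k x) (hc h k c) = cpl x c := by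
  induction x generalizing k c with
  | nil => cases c <;> rfl
  | cons a x ih =>
    cases c with
    | nil => rfl
    | cons d c =>
      have hstep : Function.Injective fun a => h (k ^^^ a) :=
        hinj.comp fun _ _ => (BitVec.xor_right_inj k).mp
      by_cases had : a = d
      · subst had
        simp [hc, cpl, ih]
      · simp [hc, cpl, had, hstep.ne had]
end

section
/- Let x ≠ e be coordinates. (i) If cpl(x, e) < |x| (x is not a prefix of e), then δ_TD(dropLast(x), e) = δ_TD(x, e) − 1, where dropLast(x) is x with its last element removed. (ii) If cpl(x, e) = |x| (x is a proper prefix of e), then the child coordinate c = take(|x| + 1, e) (the prefix of e of length |x| + 1) satisfies δ_TD(c, e) = δ_TD(x, e) − 1. Hence in the prefix-tree embedding every node with coordinate distinct from e has a tree neighbor (its parent or one of its children) strictly closer to e with respect to δ_TD: the embedding is greedy. -/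
/-- The tree distance `δ_TD x y = |x| + |y| - 2 · cpl x y`. -/
def deltaTD {α : Type*} [DecidableEq α] (x y : List α) : ℤ :=
  (x.length : ℤ) + y.length - 2 * cpl x y

lemma List.dropLast_take_succ_length {α : Type*} {x y : List α} (hxy : x <+: y)
    (hlt : x.length < y.length) :
    (y.take (x.length + 1)).dropLast = x := by
  rw [List.dropLast_eq_take, List.take_take, List.length_take, min_eq_left (Nat.succ_le_of_lt hlt),
    Nat.succ_sub_one, min_eq_left (Nat.le_succ _), ← List.prefix_iff_eq_take.mp hxy]

section CommonPrefix

variable {α : Type*} [DecidableEq α]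

lemma cpl_le_length_left : ∀ x y : List α, cpl x y ≤ x.length
  | [], _ => by simp [cpl]
  | _ :: _, [] => by simp [cpl]
  | a :: as, b :: bs => by
    simp only [cpl, List.length_cons]
    split
    · exact Nat.succ_le_succ (cpl_le_length_left as bs)
    · omega

lemma cpl_self : ∀ x : List α, cpl x x = x.length
  | [] => rfl
  | a :: as => by simp [cpl, cpl_self as]

lemma cpl_take : ∀ (n : ℕ) (x y : List α), cpl (x.take n) y = min n (cpl x y)
  | 0, _, _ => by simp [cpl]
  | _ + 1, [], _ => by simp [cpl]
  | _ + 1, _ :: _, [] => by simp [cpl]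
  | n + 1, a :: as, b :: bs => by
    simp only [List.take_succ_cons, cpl]
    split
    · rw [cpl_take n as bs]; omega
    · simp

lemma isPrefix_of_cpl_eq_length : ∀ {x y : List α}, cpl x y = x.length → x <+: y
  | [], _, _ => List.nil_prefix
  | _ :: _, [], h => by simp [cpl] at h
  | a :: as, b :: bs, h => by
    simp only [cpl, List.length_cons] at h
    split at h
    · next hab =>
      subst hab
      exact (List.prefix_cons_inj a).mpr (isPrefix_of_cpl_eq_length (by omega))
    · omega

lemma cpl_dropLast {x y : List α} (h : cpl x y < x.length) : cpl x.dropLast y = cpl x y := by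
  rw [List.dropLast_eq_take, cpl_take]
  omega

lemma cpl_take_self {n : ℕ} {y : List α} (h : n ≤ y.length) : cpl (y.take n) y = n := by
  rw [cpl_take, cpl_self]
  omega

lemma length_lt_of_cpl_eq_length {x y : List α} (hne : x ≠ y) (h : cpl x y = x.length) :
    x.length < y.length :=
  have hxy := isPrefix_of_cpl_eq_length h
  hxy.length_le.lt_of_ne fun hlen => hne (hxy.eq_of_length hlen)

lemma deltaTD_dropLast {x y : List α} (h : cpl x y < x.length) :
    deltaTD x.dropLast y = deltaTD x y - 1 := by
  have hpos : 1 ≤ x.length := by omega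
  simp only [deltaTD, cpl_dropLast h, List.length_dropLast, Nat.cast_sub hpos]
  ring

lemma deltaTD_take_succ {x y : List α} (h : cpl x y = x.length) (hlt : x.length < y.length) :
    deltaTD (y.take (x.length + 1)) y = deltaTD x y - 1 := by
  simp only [deltaTD, cpl_take_self hlt, List.length_take, min_eq_left (Nat.succ_le_of_lt hlt), h]
  push_cast
  ring

end CommonPrefix

/-- In the prefix-tree embedding, every node `x ≠ e` has a tree neighbor strictly closer
to `e` w.r.t. `δ_TD`: (i) if `cpl x e < |x|`, the parent `dropLast x` satisfies
`δ_TD (dropLast x) e = δ_TD x e - 1`; (ii) if `cpl x e = |x|`, the child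
`take (|x|+1) e` satisfies `δ_TD (take (|x|+1) e) e = δ_TD x e - 1`. Hence there is a
parent or child of `x` strictly closer to `e`: the embedding is greedy. -/
theorem prefix_tree_greedy_TD {α : Type*} [DecidableEq α] (x e : List α) (hne : x ≠ e) :
    (cpl x e < x.length → deltaTD x.dropLast e = deltaTD x e - 1) ∧
    (cpl x e = x.length → deltaTD (e.take (x.length + 1)) e = deltaTD x e - 1) ∧
    (∃ c : List α, (c = x.dropLast ∨ (c.dropLast = x ∧ c.length = x.length + 1)) ∧
      deltaTD c e < deltaTD x e) := by
  refine ⟨deltaTD_dropLast, fun h => deltaTD_take_succ h (length_lt_of_cpl_eq_length hne h), ?_⟩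
  rcases (cpl_le_length_left x e).lt_or_eq with h | h
  · exact ⟨x.dropLast, Or.inl rfl, by rw [deltaTD_dropLast h]; omega⟩
  · have hlt := length_lt_of_cpl_eq_length hne h
    refine ⟨e.take (x.length + 1), Or.inr ⟨?_, ?_⟩, by rw [deltaTD_take_succ h hlt]; omega⟩
    · exact List.dropLast_take_succ_length (isPrefix_of_cpl_eq_length h) hlt
    · rw [List.length_take, min_eq_left (Nat.succ_le_of_lt hlt)]
end
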